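/- arXiv:2506.02613 — 5 statements merged into one kernel-verified Lean document; each statement's English description precedes it below -/
import Mathlib

section
/- Let A, C ∈ ℝ^{n×n}, B, D ∈ ℝ^{n×m}, F ∈ ℝ^{m×n}, Z ∈ ℝ^{n×n} symmetric. Define A_F := [A, B; FA, FB] and C_F := [C, D; FC, FD] in ℝ^{(n+m)×(n+m)}. If a symmetric S ∈ ℝ^{(n+m)×(n+m)} satisfies S = A_F S A_F' + C_F S C_F' + [I;F] Z [I;F]', then its upper-left n×n block satisfies S₁₁ = (A+BF) S₁₁ (A+BF)' + (C+DF) S₁₁ (C+DF)' + Z. -/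
/-!
Both closed-loop matrices factor through `[I;F]`: `A_F = [I;F] [A B]` and `C_F = [I;F] [C D]`.
Hence the equation says `S = [I;F] X [I;F]ᵀ` with `X = [A B] S [A B]ᵀ + [C D] S [C D]ᵀ + Z`,
so `S₁₁ = X`. Substituting `S` back into the definition of `X` and using
`[A B] [I;F] = A + B F` gives the reduced equation for `X`.
-/

open Matrix

variable {R k l m n p : Type*}

theorem fromRows_one_mul_fromCols [Semiring R] [Fintype n] [DecidableEq n]
    (A : Matrix n l R) (B : Matrix n p R) (F : Matrix m n R) :
    fromRows 1 F * fromCols A B = fromBlocks A B (F * A) (F * B) := by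
  rw [fromRows_mul, Matrix.one_mul, mul_fromCols, fromRows_fromCols_eq_fromBlocks]

theorem toBlocks₁₁_fromRows_one_mul_mul_transpose [Semiring R] [Fintype n] [DecidableEq n]
    (F : Matrix m n R) (X : Matrix n n R) :
    (fromRows 1 F * X * (fromRows 1 F)ᵀ).toBlocks₁₁ = X := by
  rw [transpose_fromRows, fromRows_mul, fromRows_mul_fromCols, transpose_one,
    toBlocks_fromBlocks₁₁, Matrix.one_mul, Matrix.mul_one]

section Conjugation

variable [CommSemiring R] [Fintype k] [Fintype n]

theorem mul_mul_transpose_conj (P : Matrix n k R) (E : Matrix k n R) (X : Matrix n n R) :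
    P * (E * X * Eᵀ) * Pᵀ = P * E * X * (P * E)ᵀ := by
  simp only [transpose_mul, Matrix.mul_assoc]

/-- The witness is `X = P S Pᵀ + Q S Qᵀ + Z`. -/
theorem exists_eq_conj_of_eq_sum_conj {E : Matrix k n R} {P Q : Matrix n k R}
    {Z : Matrix n n R} {S : Matrix k k R}
    (hS : S = E * P * S * (E * P)ᵀ + E * Q * S * (E * Q)ᵀ + E * Z * Eᵀ) :
    ∃ X, S = E * X * Eᵀ ∧ X = P * E * X * (P * E)ᵀ + Q * E * X * (Q * E)ᵀ + Z := by
  have hSX : S = E * (P * S * Pᵀ + Q * S * Qᵀ + Z) * Eᵀ := by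
    conv_lhs => rw [hS]
    simp only [Matrix.mul_add, Matrix.add_mul, transpose_mul, Matrix.mul_assoc]
  refine ⟨_, hSX, ?_⟩
  conv_lhs => rw [hSX]
  rw [mul_mul_transpose_conj, mul_mul_transpose_conj]

end Conjugation

theorem stmt_1_general {n m : ℕ}
    (A C : Matrix (Fin n) (Fin n) ℝ) (B D : Matrix (Fin n) (Fin m) ℝ)
    (F : Matrix (Fin m) (Fin n) ℝ) (Z : Matrix (Fin n) (Fin n) ℝ)
    (S : Matrix (Fin n ⊕ Fin m) (Fin n ⊕ Fin m) ℝ)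
    (hEq : S = (fromBlocks A B (F * A) (F * B)) * S * (fromBlocks A B (F * A) (F * B))ᵀ
        + (fromBlocks C D (F * C) (F * D)) * S * (fromBlocks C D (F * C) (F * D))ᵀ
        + (fromRows 1 F) * Z * (fromRows 1 F)ᵀ) :
    S.toBlocks₁₁ = (A + B * F) * S.toBlocks₁₁ * (A + B * F)ᵀ
      + (C + D * F) * S.toBlocks₁₁ * (C + D * F)ᵀ + Z := by
  rw [← fromRows_one_mul_fromCols, ← fromRows_one_mul_fromCols] at hEq
  obtain ⟨X, hSX, hX⟩ := exists_eq_conj_of_eq_sum_conj hEq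
  rw [hSX, toBlocks₁₁_fromRows_one_mul_mul_transpose]
  simpa only [fromCols_mul_fromRows, Matrix.mul_one] using hX

theorem stmt_1 {n m : ℕ}
    (A C : Matrix (Fin n) (Fin n) ℝ) (B D : Matrix (Fin n) (Fin m) ℝ)
    (F : Matrix (Fin m) (Fin n) ℝ) (Z : Matrix (Fin n) (Fin n) ℝ)
    (hZ : Zᵀ = Z)
    (S : Matrix (Fin n ⊕ Fin m) (Fin n ⊕ Fin m) ℝ) (hSsym : Sᵀ = S)
    (hEq : S = (fromBlocks A B (F * A) (F * B)) * S * (fromBlocks A B (F * A) (F * B))ᵀ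
        + (fromBlocks C D (F * C) (F * D)) * S * (fromBlocks C D (F * C) (F * D))ᵀ
        + (fromRows 1 F) * Z * (fromRows 1 F)ᵀ) :
    S.toBlocks₁₁ = (A + B * F) * S.toBlocks₁₁ * (A + B * F)ᵀ
      + (C + D * F) * S.toBlocks₁₁ * (C + D * F)ᵀ + Z :=
  stmt_1_general A C B D F Z S hEq
end

section
/- Let X ∈ ℝ^{(n+m)×(n+m)} be symmetric positive semidefinite with positive definite lower-right block X₂₂, and let Z ∈ ℝ^{n×n} be symmetric positive semidefinite. Then F* := −X₂₂⁻¹ X₁₂' minimizes the function F ↦ Tr(Z · [I;F]' X [I;F]) over all F ∈ ℝ^{m×n}. -/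
/-! With `B := X₁₂` and `D := X₂₂`, completing the square gives
`[I;F]ᵀ X [I;F] = (X₁₁ - B D⁻¹ Bᵀ) + (F + D⁻¹Bᵀ)ᵀ D (F + D⁻¹Bᵀ)`: a Schur complement independent
of `F` plus a positive semidefinite term that vanishes at `F*`. The trace of a product of two
positive semidefinite matrices is nonnegative, so multiplying by `Z` keeps the comparison. -/

open Matrix

namespace Matrix

section Blocks

variable {R : Type*} {m n : Type*} [Fintype m] [Fintype n] [DecidableEq n]

lemma fromRows_one_transpose_mul_fromBlocks_mul_fromRows_one [Semiring R]
    (A : Matrix n n R) (B : Matrix n m R) (C : Matrix m n R) (D : Matrix m m R)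
    (F : Matrix m n R) :
    (fromRows (1 : Matrix n n R) F)ᵀ * fromBlocks A B C D * fromRows (1 : Matrix n n R) F =
      A + B * F + Fᵀ * C + Fᵀ * D * F := by
  rw [transpose_fromRows, fromCols_mul_fromBlocks, fromCols_mul_fromRows]
  simp only [transpose_one, Matrix.one_mul, Matrix.add_mul, Matrix.mul_one, Matrix.mul_assoc]
  abel

variable [CommRing R] [DecidableEq m]

lemma IsSymm.fromRows_one_transpose_mul_mul_fromRows_one {X : Matrix (n ⊕ m) (n ⊕ m) R}
    (hX : X.IsSymm) (hD : IsUnit X.toBlocks₂₂.det) (F : Matrix m n R) :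
    (fromRows (1 : Matrix n n R) F)ᵀ * X * fromRows (1 : Matrix n n R) F =
      (X.toBlocks₁₁ - X.toBlocks₁₂ * X.toBlocks₂₂⁻¹ * X.toBlocks₁₂ᵀ) +
        (F + X.toBlocks₂₂⁻¹ * X.toBlocks₁₂ᵀ)ᵀ * X.toBlocks₂₂ *
          (F + X.toBlocks₂₂⁻¹ * X.toBlocks₁₂ᵀ) := by
  set A := X.toBlocks₁₁
  set B := X.toBlocks₁₂
  set D := X.toBlocks₂₂
  obtain ⟨-, hBC, -, hDsymm⟩ := isSymm_fromBlocks_iff.mp (X.fromBlocks_toBlocks.symm ▸ hX)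
  have hXblocks : X = Matrix.fromBlocks A B Bᵀ D := by rw [hBC, fromBlocks_toBlocks]
  rw [hXblocks, fromRows_one_transpose_mul_fromBlocks_mul_fromRows_one]
  have hDinv : D⁻¹ᵀ = D⁻¹ := by rw [transpose_nonsing_inv, hDsymm.eq]
  simp only [transpose_add, transpose_mul, transpose_transpose, hDinv, Matrix.add_mul,
    Matrix.mul_add, Matrix.mul_assoc, mul_nonsing_inv_cancel_left _ _ hD,
    nonsing_inv_mul_cancel_left _ _ hD]
  abel

end Blocks

open scoped ComplexOrder in
lemma PosSemidef.trace_mul_nonneg {𝕜 k : Type*} [RCLike 𝕜] [Fintype k] {A B : Matrix k k 𝕜}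
    (hA : A.PosSemidef) (hB : B.PosSemidef) : 0 ≤ (A * B).trace := by
  classical
  open scoped MatrixOrder Matrix.Norms.L2Operator in
  obtain ⟨C, rfl⟩ := CStarAlgebra.nonneg_iff_eq_star_mul_self.mp hA.nonneg
  rw [star_eq_conjTranspose, Matrix.mul_assoc, trace_mul_comm]
  exact (hB.mul_mul_conjTranspose_same C).trace_nonneg

end Matrix

theorem stmt_5 {n m : ℕ}
    (X : Matrix (Fin n ⊕ Fin m) (Fin n ⊕ Fin m) ℝ)
    (hX : X.PosSemidef) (hX22 : X.toBlocks₂₂.PosDef)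
    (Z : Matrix (Fin n) (Fin n) ℝ) (hZ : Z.PosSemidef) :
    ∀ F : Matrix (Fin m) (Fin n) ℝ,
      trace (Z * ((fromRows (1 : Matrix (Fin n) (Fin n) ℝ) (-(X.toBlocks₂₂⁻¹ * X.toBlocks₁₂ᵀ)))ᵀ * X
          * (fromRows (1 : Matrix (Fin n) (Fin n) ℝ) (-(X.toBlocks₂₂⁻¹ * X.toBlocks₁₂ᵀ)))))
        ≤ trace (Z * ((fromRows (1 : Matrix (Fin n) (Fin n) ℝ) F)ᵀ * X * (fromRows (1 : Matrix (Fin n) (Fin n) ℝ) F))) := by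
  intro F
  have hXsymm : X.IsSymm := isHermitian_iff_isSymm.mp hX.isHermitian
  have hD : IsUnit X.toBlocks₂₂.det := (isUnit_iff_isUnit_det _).mp hX22.isUnit
  rw [hXsymm.fromRows_one_transpose_mul_mul_fromRows_one hD,
    hXsymm.fromRows_one_transpose_mul_mul_fromRows_one hD, neg_add_cancel, transpose_zero,
    Matrix.zero_mul, Matrix.mul_zero, add_zero, Matrix.mul_add, trace_add]
  refine le_add_of_nonneg_right (hZ.trace_mul_nonneg ?_)
  simpa only [conjTranspose_eq_transpose_of_trivial] using
    hX22.posSemidef.conjTranspose_mul_mul_same (F + X.toBlocks₂₂⁻¹ * X.toBlocks₁₂ᵀ)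
end

section
/- Suppose P^(i) is symmetric and F^(i), F^(i+1) ∈ ℝ^{m×n} with F^(i+1) = −(R + B'P^(i)B + D'P^(i)D)⁻¹(B'P^(i)A + D'P^(i)C), where R + B'P^(i)B + D'P^(i)D is invertible, and P^(i) satisfies the policy evaluation equation P^(i) = (A+BF^(i))'P^(i)(A+BF^(i)) + (C+DF^(i))'P^(i)(C+DF^(i)) + Q + (F^(i))'RF^(i). Then P^(i) = (A+BF^(i+1))'P^(i)(A+BF^(i+1)) + (C+DF^(i+1))'P^(i)(C+DF^(i+1)) + Q + (F^(i+1))'RF^(i+1) + (ΔF)'(R + B'P^(i)B + D'P^(i)D)(ΔF), where ΔF := F^(i) − F^(i+1). -/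
open Matrix

theorem stmt_10 {n m : ℕ}
    (A C Q : Matrix (Fin n) (Fin n) ℝ) (B D : Matrix (Fin n) (Fin m) ℝ)
    (R : Matrix (Fin m) (Fin m) ℝ) (hQ : Qᵀ = Q) (hR : Rᵀ = R)
    (P : Matrix (Fin n) (Fin n) ℝ) (hP : Pᵀ = P)
    (F F' : Matrix (Fin m) (Fin n) ℝ)
    (hInv : IsUnit (R + Bᵀ * P * B + Dᵀ * P * D))
    (hF' : F' = -(R + Bᵀ * P * B + Dᵀ * P * D)⁻¹ * (Bᵀ * P * A + Dᵀ * P * C))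
    (hPE : P = (A + B * F)ᵀ * P * (A + B * F) + (C + D * F)ᵀ * P * (C + D * F)
      + Q + Fᵀ * R * F) :
    P = (A + B * F')ᵀ * P * (A + B * F') + (C + D * F')ᵀ * P * (C + D * F')
      + Q + F'ᵀ * R * F'
      + (F - F')ᵀ * (R + Bᵀ * P * B + Dᵀ * P * D) * (F - F') := by
  set G : Matrix (Fin m) (Fin m) ℝ := R + Bᵀ * P * B + Dᵀ * P * D with hG
  set L : Matrix (Fin m) (Fin n) ℝ := Bᵀ * P * A + Dᵀ * P * C with hL
  have hGsym : Gᵀ = G := by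
    simp [hG, transpose_add, transpose_mul, hP, hR, Matrix.mul_assoc]
  have h1 : G * F' = -L := by
    rw [hF', Matrix.neg_mul, Matrix.mul_neg, Matrix.mul_nonsing_inv_cancel_left _ _
      ((Matrix.isUnit_iff_isUnit_det G).mp hInv)]
  have h2 : F'ᵀ * G = -Lᵀ := by
    have := congrArg Matrix.transpose h1
    simpa [transpose_mul, hGsym] using this
  have expand : ∀ K : Matrix (Fin m) (Fin n) ℝ,
      (A + B * K)ᵀ * P * (A + B * K) + (C + D * K)ᵀ * P * (C + D * K)
        + Q + Kᵀ * R * K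
      = Aᵀ * P * A + Cᵀ * P * C + Q + Kᵀ * L + Lᵀ * K + Kᵀ * G * K := by
    intro K
    simp only [transpose_add, transpose_mul, Matrix.add_mul, Matrix.mul_add,
      hG, hL, hP, Matrix.mul_assoc, transpose_transpose]
    abel
  have key : Fᵀ * L + Lᵀ * F + Fᵀ * G * F
      = F'ᵀ * L + Lᵀ * F' + F'ᵀ * G * F' + (F - F')ᵀ * G * (F - F') := by
    have e1 : Fᵀ * (G * F') = -(Fᵀ * L) := by rw [h1, Matrix.mul_neg]
    have e2 : F'ᵀ * G * F = -(Lᵀ * F) := by rw [h2]; simp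
    have e3 : F'ᵀ * G * F' = -(Lᵀ * F') := by rw [h2]; simp
    have e4 : F'ᵀ * L = Lᵀ * F' := by
      have : F'ᵀ * (G * F') = F'ᵀ * (-L) := by rw [h1]
      rw [← Matrix.mul_assoc, e3, Matrix.mul_neg] at this
      exact (neg_inj.mp this).symm
    have : (F - F')ᵀ * G * (F - F')
        = Fᵀ * G * F - Fᵀ * G * F' - F'ᵀ * G * F + F'ᵀ * G * F' := by
      simp only [transpose_sub, Matrix.sub_mul, Matrix.mul_sub]
      abel
    rw [this, Matrix.mul_assoc Fᵀ G F', e1, e2, e3, e4]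
    abel
  calc P = (A + B * F)ᵀ * P * (A + B * F) + (C + D * F)ᵀ * P * (C + D * F)
        + Q + Fᵀ * R * F := hPE
    _ = Aᵀ * P * A + Cᵀ * P * C + Q + Fᵀ * L + Lᵀ * F + Fᵀ * G * F := expand F
    _ = Aᵀ * P * A + Cᵀ * P * C + Q + (Fᵀ * L + Lᵀ * F + Fᵀ * G * F) := by abel
    _ = Aᵀ * P * A + Cᵀ * P * C + Q
        + (F'ᵀ * L + Lᵀ * F' + F'ᵀ * G * F' + (F - F')ᵀ * G * (F - F')) := by rw [key]
    _ = (Aᵀ * P * A + Cᵀ * P * C + Q + F'ᵀ * L + Lᵀ * F' + F'ᵀ * G * F')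
        + (F - F')ᵀ * G * (F - F') := by abel
    _ = (A + B * F')ᵀ * P * (A + B * F') + (C + D * F')ᵀ * P * (C + D * F')
        + Q + F'ᵀ * R * F' + (F - F')ᵀ * G * (F - F') := by rw [expand F']
end

section
/- With the setup of the policy-iteration identity: if additionally P^(i+1) satisfies P^(i+1) = (A+BF^(i+1))'P^(i+1)(A+BF^(i+1)) + (C+DF^(i+1))'P^(i+1)(C+DF^(i+1)) + Q + (F^(i+1))'RF^(i+1), then ΔP := P^(i) − P^(i+1) satisfies (A+BF^(i+1))'ΔP(A+BF^(i+1)) + (C+DF^(i+1))'ΔP(C+DF^(i+1)) − ΔP = −(ΔF)'(R+B'P^(i)B+D'P^(i)D)(ΔF), where ΔF = F^(i) − F^(i+1). -/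
open Matrix

theorem stmt_11 {n m : ℕ}
    (A C Q : Matrix (Fin n) (Fin n) ℝ) (B D : Matrix (Fin n) (Fin m) ℝ)
    (R : Matrix (Fin m) (Fin m) ℝ) (hQ : Qᵀ = Q) (hR : Rᵀ = R)
    (P P' : Matrix (Fin n) (Fin n) ℝ) (hP : Pᵀ = P) (hP' : P'ᵀ = P')
    (F F' : Matrix (Fin m) (Fin n) ℝ)
    (hInv : IsUnit (R + Bᵀ * P * B + Dᵀ * P * D))
    (hF' : F' = -(R + Bᵀ * P * B + Dᵀ * P * D)⁻¹ * (Bᵀ * P * A + Dᵀ * P * C))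
    (hPE : P = (A + B * F)ᵀ * P * (A + B * F) + (C + D * F)ᵀ * P * (C + D * F)
      + Q + Fᵀ * R * F)
    (hPE' : P' = (A + B * F')ᵀ * P' * (A + B * F') + (C + D * F')ᵀ * P' * (C + D * F')
      + Q + F'ᵀ * R * F') :
    (A + B * F')ᵀ * (P - P') * (A + B * F') + (C + D * F')ᵀ * (P - P') * (C + D * F')
      - (P - P')
      = -((F - F')ᵀ * (R + Bᵀ * P * B + Dᵀ * P * D) * (F - F')) := by
  have hdet : IsUnit (R + Bᵀ * P * B + Dᵀ * P * D).det :=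
    (Matrix.isUnit_iff_isUnit_det _).mp hInv
  have key : (R + Bᵀ * P * B + Dᵀ * P * D) * F' + (Bᵀ * P * A + Dᵀ * P * C) = 0 := by
    rw [hF', Matrix.neg_mul, Matrix.mul_neg, ← Matrix.mul_assoc,
      Matrix.mul_nonsing_inv _ hdet, Matrix.one_mul, neg_add_cancel]
  have main : P - P' = (A + B * F')ᵀ * (P - P') * (A + B * F')
      + (C + D * F')ᵀ * (P - P') * (C + D * F')
      + (F - F')ᵀ * (R + Bᵀ * P * B + Dᵀ * P * D) * (F - F') := by
    have step : (A + B * F)ᵀ * P * (A + B * F) + (C + D * F)ᵀ * P * (C + D * F)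
        + Q + Fᵀ * R * F
        - ((A + B * F')ᵀ * P' * (A + B * F') + (C + D * F')ᵀ * P' * (C + D * F')
        + Q + F'ᵀ * R * F')
        = (A + B * F')ᵀ * (P - P') * (A + B * F')
        + (C + D * F')ᵀ * (P - P') * (C + D * F')
        + (F - F')ᵀ * (R + Bᵀ * P * B + Dᵀ * P * D) * (F - F')
        + (F - F')ᵀ * ((R + Bᵀ * P * B + Dᵀ * P * D) * F' + (Bᵀ * P * A + Dᵀ * P * C))
        + ((R + Bᵀ * P * B + Dᵀ * P * D) * F' + (Bᵀ * P * A + Dᵀ * P * C))ᵀ * (F - F') := by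
      simp only [Matrix.transpose_add, Matrix.transpose_mul, Matrix.transpose_sub, Matrix.transpose_transpose,
        hP, hP', hQ, hR, Matrix.sub_mul, Matrix.mul_sub, Matrix.add_mul, Matrix.mul_add]
      simp only [Matrix.mul_assoc]
      abel
    calc P - P' = (A + B * F)ᵀ * P * (A + B * F) + (C + D * F)ᵀ * P * (C + D * F)
          + Q + Fᵀ * R * F
          - ((A + B * F')ᵀ * P' * (A + B * F') + (C + D * F')ᵀ * P' * (C + D * F')
          + Q + F'ᵀ * R * F') := by rw [← hPE, ← hPE']
      _ = _ := by rw [step, key]; simp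
  nth_rewrite 3 [main]
  noncomm_ring
end

section
/- Let D_{A,C} denote the linear operator on n×n symmetric real matrices given by D_{A,C}(X) = A X A' + C X C'. If there exist symmetric matrices S ≻ 0 and Q ≻ 0 with A'SA + C'SC + Q = S, then every eigenvalue λ of the operator D_{A,C} satisfies |λ| < 1. -/
/-!
For the trace pairing, `D_{A,C}` is the adjoint of `W ↦ AᵀWA + CᵀWC`, so `λ` is also an eigenvalue
of the latter, with a nonzero complex eigenvector `W`. Restricted to real vectors, `W` gives a
bilinear form `β(u, v) = uᵀWv` with `β(Au, Av) + β(Cu, Cv) = λ β(u, v)`. In the norm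
`‖u‖² = uᵀSu` the Lyapunov equation reads `‖Au‖² + ‖Cu‖² = ‖u‖² - uᵀQu < ‖u‖²` for `u ≠ 0`.
Evaluating at `u, v` in the unit ball where `|β(u, v)|` attains the norm `N > 0` of `β`, and bounding
by `N (‖Au‖‖Av‖ + ‖Cu‖‖Cv‖)` and Cauchy–Schwarz, gives `|λ| N < N`.
-/

open Matrix

section NormAttained

variable {𝕜 E F : Type*} [RCLike 𝕜] [NormedAddCommGroup E] [NormedSpace 𝕜 E]
  [FiniteDimensional 𝕜 E] [NormedAddCommGroup F] [NormedSpace 𝕜 F]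

theorem ContinuousLinearMap.exists_norm_le_one_and_norm_apply_eq (f : E →L[𝕜] F) :
    ∃ x, ‖x‖ ≤ 1 ∧ ‖f x‖ = ‖f‖ := by
  have : ProperSpace E := FiniteDimensional.proper_rclike 𝕜 E
  obtain ⟨x, hx, hmax⟩ := (isCompact_closedBall (0 : E) 1).exists_sSup_image_eq
    (Metric.nonempty_closedBall.2 zero_le_one) f.continuous.norm.continuousOn
  exact ⟨x, mem_closedBall_zero_iff.1 hx, by rw [← hmax, f.sSup_unitClosedBall_eq_norm]⟩

end NormAttained

theorem norm_lt_one_of_sum_eq_smul_of_sum_sq_norm_lt {ι E F 𝕜 : Type*} [Fintype ι]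
    [NormedAddCommGroup E] [NormedSpace ℝ E] [FiniteDimensional ℝ E]
    [NormedAddCommGroup F] [NormedSpace ℝ F] [NormedField 𝕜] [NormedSpace 𝕜 F]
    (T : ι → E → E) (hT : ∀ x ≠ 0, ∑ k, ‖T k x‖ ^ 2 < ‖x‖ ^ 2)
    (β : E →ₗ[ℝ] E →ₗ[ℝ] F) (hβ : β ≠ 0) {μ : 𝕜}
    (hμ : ∀ x y, ∑ k, β (T k x) (T k y) = μ • β x y) : ‖μ‖ < 1 := by
  set β' := β.toContinuousBilinearMap
  obtain ⟨x, hx, hβx⟩ := β'.exists_norm_le_one_and_norm_apply_eq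
  obtain ⟨y, hy, hβxy⟩ := (β' x).exists_norm_le_one_and_norm_apply_eq
  have hβ' : β' ≠ 0 := fun h ↦ hβ <| by ext x y; simpa [β'] using congr($h x y)
  have hN : 0 < ‖β'‖ := (norm_pos_iff (a := β')).2 hβ'
  have hxy : ‖β x y‖ = ‖β'‖ := hβxy.trans hβx
  have hx0 : x ≠ 0 := by rintro rfl; simp [hN.ne] at hxy
  have hy0 : y ≠ 0 := by rintro rfl; simp [hN.ne] at hxy
  have contract : ∀ z ≠ (0 : E), √(∑ k, ‖T k z‖ ^ 2) < ‖z‖ := fun z hz ↦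
    (Real.sqrt_lt' (norm_pos_iff.2 hz)).2 (hT z hz)
  have key : ‖μ‖ * ‖β'‖ < ‖β'‖ * 1 :=
    calc ‖μ‖ * ‖β'‖ = ‖∑ k, β (T k x) (T k y)‖ := by rw [hμ, norm_smul, hxy]
      _ ≤ ∑ k, ‖β'‖ * (‖T k x‖ * ‖T k y‖) := by
        refine (norm_sum_le _ _).trans (Finset.sum_le_sum fun k _ ↦ ?_)
        rw [← mul_assoc]
        exact β'.le_opNorm₂ _ _
      _ ≤ ‖β'‖ * (√(∑ k, ‖T k x‖ ^ 2) * √(∑ k, ‖T k y‖ ^ 2)) := by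
        rw [← Finset.mul_sum]
        gcongr
        exact Real.sum_mul_le_sqrt_mul_sqrt _ _ _
      _ < ‖β'‖ * (‖x‖ * ‖y‖) := by
        gcongr
        exacts [contract x hx0, contract y hy0]
      _ ≤ ‖β'‖ * 1 := by gcongr; nlinarith [norm_nonneg x, norm_nonneg y]
  exact lt_of_mul_lt_mul_right (by simpa [mul_comm] using key) hN.le

namespace Matrix

variable {ι m K : Type*} [Fintype ι] [Fintype m]

def lyapunovOp [CommSemiring K] (A : ι → Matrix m m K) : Module.End K (Matrix m m K) :=
  ∑ k, LinearMap.mulLeft K (A k) ∘ₗ LinearMap.mulRight K (A k)ᵀ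

theorem lyapunovOp_apply [CommSemiring K] (A : ι → Matrix m m K) (X : Matrix m m K) :
    lyapunovOp A X = ∑ k, A k * X * (A k)ᵀ := by
  simp [lyapunovOp, mul_assoc]

theorem trace_mul_lyapunovOp [CommSemiring K] (A : ι → Matrix m m K) (W Z : Matrix m m K) :
    (W * lyapunovOp A Z).trace = (lyapunovOp (fun k ↦ (A k)ᵀ) W * Z).trace := by
  simp only [lyapunovOp_apply, transpose_transpose, Finset.mul_sum, Finset.sum_mul, trace_sum]
  refine Finset.sum_congr rfl fun k _ ↦ ?_
  rw [← mul_assoc, trace_mul_comm, ← mul_assoc, ← mul_assoc]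

theorem _root_.Module.End.HasEigenvalue.of_trace_mul_eq [Field K]
    {f g : Module.End K (Matrix m m K)} (hfg : ∀ W Z, (W * f Z).trace = (g W * Z).trace)
    {μ : K} (hf : f.HasEigenvalue μ) : g.HasEigenvalue μ := by
  obtain ⟨X, hX⟩ := hf.exists_hasEigenvector
  by_contra hg
  rw [Module.End.hasEigenvalue_iff_mem_spectrum, spectrum.mem_iff, not_not] at hg
  refine hX.2 (ext_iff_trace_mul_left.2 fun Y ↦ ?_)
  obtain ⟨W, rfl⟩ := ((Module.End.isUnit_iff _).1 hg).2 Y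
  simp [sub_mul, ← hfg, Module.End.mem_eigenspace_iff.1 hX.1]

variable [DecidableEq m]

open scoped MatrixOrder in
theorem PosDef.exists_linearEquiv_norm_sq_eq {S : Matrix m m ℝ} (hS : S.PosDef) :
    ∃ e : (m → ℝ) ≃ₗ[ℝ] EuclideanSpace ℝ m, ∀ u, ‖e u‖ ^ 2 = u ⬝ᵥ S *ᵥ u := by
  have hB : IsUnit (CFC.sqrt S) := (isStrictlyPositive_iff_posDef.2 hS).isUnit_cfcSqrt
  have hBT : (CFC.sqrt S)ᵀ = CFC.sqrt S := by
    rw [← conjTranspose_eq_transpose_of_trivial]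
    exact (CFC.sqrt_nonneg S).isSelfAdjoint.star_eq
  refine ⟨((CFC.sqrt S).toLinearEquiv' hB.invertible).trans (WithLp.linearEquiv 2 ℝ _).symm,
    fun u ↦ ?_⟩
  calc ‖(WithLp.linearEquiv 2 ℝ _).symm (CFC.sqrt S *ᵥ u)‖ ^ 2
      = (CFC.sqrt S *ᵥ u) ⬝ᵥ (CFC.sqrt S *ᵥ u) := by
        rw [EuclideanSpace.real_norm_sq_eq]
        simp [dotProduct, sq]
    _ = u ⬝ᵥ ((CFC.sqrt S)ᵀ * CFC.sqrt S) *ᵥ u := by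
        rw [← mulVec_mulVec, dotProduct_mulVec u, vecMul_transpose]
    _ = u ⬝ᵥ S *ᵥ u := by rw [hBT, CFC.sqrt_mul_sqrt_self S hS.posSemidef.nonneg]

noncomputable def toRealLinearMap₂' (W : Matrix m m ℂ) : (m → ℝ) →ₗ[ℝ] (m → ℝ) →ₗ[ℝ] ℂ :=
  ((toLinearMap₂' ℂ W).restrictScalars₁₂ ℝ ℝ).compl₁₂
    (Complex.ofRealCLM.toLinearMap.compLeft m) (Complex.ofRealCLM.toLinearMap.compLeft m)

theorem toRealLinearMap₂'_apply (W : Matrix m m ℂ) (u v : m → ℝ) :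
    toRealLinearMap₂' W u v = (Complex.ofReal ∘ u) ⬝ᵥ W *ᵥ (Complex.ofReal ∘ v) := by
  simp only [toRealLinearMap₂', LinearMap.compl₁₂_apply, LinearMap.restrictScalars₁₂_apply_apply,
    toLinearMap₂'_apply']
  rfl

theorem toRealLinearMap₂'_mulVec (W : Matrix m m ℂ) (M : Matrix m m ℝ) (u v : m → ℝ) :
    toRealLinearMap₂' W (M *ᵥ u) (M *ᵥ v)
      = toRealLinearMap₂' ((M.map Complex.ofReal)ᵀ * W * M.map Complex.ofReal) u v := by
  have hc : ∀ w, Complex.ofReal ∘ (M *ᵥ w) = M.map Complex.ofReal *ᵥ (Complex.ofReal ∘ w) :=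
    fun w ↦ funext (RingHom.map_mulVec Complex.ofRealHom M w)
  rw [toRealLinearMap₂'_apply, toRealLinearMap₂'_apply, hc, hc, ← mulVec_mulVec,
    ← mulVec_mulVec, dotProduct_mulVec (Complex.ofReal ∘ u), vecMul_transpose]

theorem toRealLinearMap₂'_ne_zero {W : Matrix m m ℂ} (hW : W ≠ 0) :
    toRealLinearMap₂' W ≠ 0 := by
  contrapose! hW
  ext i j
  simpa [toRealLinearMap₂'_apply, Function.comp_def, Pi.single_apply, apply_ite Complex.ofReal,
    dotProduct, mulVec] using congr($hW (Pi.single i 1) (Pi.single j 1))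

theorem norm_lt_one_of_sum_transpose_mul_mul_eq_smul (A : ι → Matrix m m ℝ)
    {S Q : Matrix m m ℝ} (hS : S.PosDef) (hQ : Q.PosDef) (hL : ∑ k, (A k)ᵀ * S * A k + Q = S)
    {μ : ℂ} {W : Matrix m m ℂ} (hW : W ≠ 0)
    (hWμ : ∑ k, ((A k).map Complex.ofReal)ᵀ * W * (A k).map Complex.ofReal = μ • W) :
    ‖μ‖ < 1 := by
  obtain ⟨e, he⟩ := hS.exists_linearEquiv_norm_sq_eq
  refine norm_lt_one_of_sum_eq_smul_of_sum_sq_norm_lt (fun k x ↦ e (A k *ᵥ e.symm x))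
    (fun x hx ↦ ?_) ((toRealLinearMap₂' W).compl₁₂ e.symm.toLinearMap e.symm.toLinearMap)
    (fun h ↦ ?_) (fun x y ↦ ?_)
  · obtain ⟨u, rfl⟩ := e.surjective x
    have hu : u ≠ 0 := by rintro rfl; simp at hx
    have hQu : 0 < u ⬝ᵥ Q *ᵥ u := by simpa using hQ.dotProduct_mulVec_pos hu
    calc ∑ k, ‖e (A k *ᵥ e.symm (e u))‖ ^ 2 = u ⬝ᵥ (∑ k, (A k)ᵀ * S * A k) *ᵥ u := by
          simp only [LinearEquiv.symm_apply_apply, he, sum_mulVec, dotProduct_sum]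
          refine Finset.sum_congr rfl fun k _ ↦ ?_
          rw [← mulVec_mulVec, ← mulVec_mulVec, dotProduct_mulVec u, vecMul_transpose]
      _ = u ⬝ᵥ S *ᵥ u - u ⬝ᵥ Q *ᵥ u := by
          rw [← dotProduct_sub, ← sub_mulVec, eq_sub_of_add_eq hL]
      _ < ‖e u‖ ^ 2 := by rw [he]; linarith
  · refine toRealLinearMap₂'_ne_zero hW (LinearMap.ext₂ fun u v ↦ ?_)
    simpa using congr($h (e u) (e v))
  · simp only [LinearMap.compl₁₂_apply, LinearEquiv.coe_coe, LinearEquiv.symm_apply_apply,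
      toRealLinearMap₂'_mulVec]
    simp only [toRealLinearMap₂'_apply]
    rw [← dotProduct_sum, ← sum_mulVec, hWμ, smul_mulVec, dotProduct_smul, smul_eq_mul]

theorem norm_lt_one_of_hasEigenvalue_lyapunovOp (A : ι → Matrix m m ℝ)
    {S Q : Matrix m m ℝ} (hS : S.PosDef) (hQ : Q.PosDef) (hL : ∑ k, (A k)ᵀ * S * A k + Q = S)
    {μ : ℂ} (hμ : (lyapunovOp fun k ↦ (A k).map Complex.ofReal).HasEigenvalue μ) : ‖μ‖ < 1 := by
  obtain ⟨W, hW⟩ := (hμ.of_trace_mul_eq (trace_mul_lyapunovOp _)).exists_hasEigenvector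
  refine norm_lt_one_of_sum_transpose_mul_mul_eq_smul A hS hQ hL hW.2 ?_
  simpa [lyapunovOp_apply] using Module.End.mem_eigenspace_iff.1 hW.1

end Matrix

theorem stmt_16_general {n : ℕ}
    (A C : Matrix (Fin n) (Fin n) ℝ)
    (S Q : Matrix (Fin n) (Fin n) ℝ) (hS : S.PosDef) (hQ : Q.PosDef)
    (hLyap : Aᵀ * S * A + Cᵀ * S * C + Q = S)
    (lam : ℂ) (X : Matrix (Fin n) (Fin n) ℂ) (hX0 : X ≠ 0)
    (hEig : (A.map (Complex.ofReal)) * X * (A.map (Complex.ofReal))ᵀ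
        + (C.map (Complex.ofReal)) * X * (C.map (Complex.ofReal))ᵀ = lam • X) :
    ‖lam‖ < 1 := by
  refine norm_lt_one_of_hasEigenvalue_lyapunovOp ![A, C] hS hQ
    (by simpa [Fin.sum_univ_two] using hLyap) ?_
  refine Module.End.hasEigenvalue_of_hasEigenvector ⟨Module.End.mem_eigenspace_iff.2 ?_, hX0⟩
  simpa [lyapunovOp_apply, Fin.sum_univ_two] using hEig

theorem stmt_16 {n : ℕ}
    (A C : Matrix (Fin n) (Fin n) ℝ)
    (S Q : Matrix (Fin n) (Fin n) ℝ) (hS : S.PosDef) (hQ : Q.PosDef)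
    (hLyap : Aᵀ * S * A + Cᵀ * S * C + Q = S)
    (lam : ℂ) (X : Matrix (Fin n) (Fin n) ℂ) (hXsym : Xᵀ = X) (hX0 : X ≠ 0)
    (hEig : (A.map (Complex.ofReal)) * X * (A.map (Complex.ofReal))ᵀ
        + (C.map (Complex.ofReal)) * X * (C.map (Complex.ofReal))ᵀ = lam • X) :
    ‖lam‖ < 1 :=
  stmt_16_general A C S Q hS hQ hLyap lam X hX0 hEig
end
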